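/- Fix λ, μ > 0 and w > 0. With a, b, D as functions of λᵢ as above, the map λᵢ ↦ (a e^{bw} − b e^{aw})/(a − b) is strictly convex on the interval of λᵢ where D(λᵢ) > 0. -/

import Mathlib

/-!
With `c = (λ + μ) w / 2` and `x = D w / 2`, the roots `a, b = (-(λ + μ) ± D) / 2` give
`(a e^{bw} - b e^{aw}) / (a - b) = e^{-c} (cosh x + c sinh x / x)
  = ∑ₙ e^{-c} (1 / (2n)! + c / (2n + 1)!) (x²)ⁿ`.
Since `x² = w² ((λ + μ)² - 4 λᵢ μ) / 4` is a positive, injective affine function of `λᵢ`,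
`PA` is a power series with positive coefficients composed with such a map, hence strictly convex.
-/

noncomputable def PA (lam mu w li : ℝ) : ℝ :=
  let D := Real.sqrt ((lam + mu)^2 - 4 * li * mu)
  let a := (-(lam + mu) + D)/2
  let b := (-(lam + mu) - D)/2
  (a * Real.exp (b * w) - b * Real.exp (a * w)) / (a - b)

open Real Set
open scoped Nat

theorem strictConvexOn_tsum_mul_pow {κ : ℕ → ℝ} {s : Set ℝ} (hs : Convex ℝ s)
    (hs0 : s ⊆ Ici 0) (hκ : ∀ n, 0 ≤ κ n) {m : ℕ} (hm : 2 ≤ m) (hκm : 0 < κ m)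
    (hsum : ∀ u ∈ s, Summable fun n => κ n * u ^ n) :
    StrictConvexOn ℝ s fun u => ∑' n, κ n * u ^ n := by
  refine ⟨hs, fun x hx y hy hxy a b ha hb hab => ?_⟩
  have hterm (n : ℕ) :
      κ n * (a • x + b • y) ^ n ≤ a * (κ n * x ^ n) + b * (κ n * y ^ n) := by
    have := (convexOn_pow n).2 (hs0 hx) (hs0 hy) ha.le hb.le hab
    simp only [smul_eq_mul] at this ⊢
    nlinarith [hκ n]
  have hterm_m : κ m * (a • x + b • y) ^ m < a * (κ m * x ^ m) + b * (κ m * y ^ m) := by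
    have := (strictConvexOn_pow hm).2 (hs0 hx) (hs0 hy) hxy ha hb hab
    simp only [smul_eq_mul] at this ⊢
    nlinarith
  have hsum_x := (hsum x hx).mul_left a
  have hsum_y := (hsum y hy).mul_left b
  calc ∑' n, κ n * (a • x + b • y) ^ n
      < ∑' n, (a * (κ n * x ^ n) + b * (κ n * y ^ n)) :=
        Summable.tsum_lt_tsum hterm hterm_m (hsum _ (hs hx hy ha.le hb.le hab))
          (hsum_x.add hsum_y)
    _ = a • ∑' n, κ n * x ^ n + b • ∑' n, κ n * y ^ n := by
        rw [hsum_x.tsum_add hsum_y, tsum_mul_left, tsum_mul_left]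
        rfl

theorem StrictConvexOn.comp_const_add_mul {g : ℝ → ℝ} {s t : Set ℝ} {α β : ℝ}
    (hg : StrictConvexOn ℝ t g) (hβ : β ≠ 0) (hs : Convex ℝ s)
    (hst : MapsTo (fun x => α + β * x) s t) :
    StrictConvexOn ℝ s fun x => g (α + β * x) := by
  refine ⟨hs, fun x hx y hy hxy a b ha hb hab => ?_⟩
  have hne : α + β * x ≠ α + β * y := fun h =>
    hxy (mul_left_cancel₀ hβ (add_left_cancel h))
  convert hg.2 (hst hx) (hst hy) hne ha hb hab using 2
  simp only [smul_eq_mul]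
  linear_combination (-α) * hab

theorem mul_exp_sub_mul_exp_div_sub (a b w : ℝ) (hab : a ≠ b) :
    (a * exp (b * w) - b * exp (a * w)) / (a - b) =
      exp ((a + b) / 2 * w) *
        (cosh ((a - b) / 2 * w) - (a + b) / (a - b) * sinh ((a - b) / 2 * w)) := by
  have hab' : a - b ≠ 0 := sub_ne_zero.mpr hab
  have ha : exp (a * w) = exp ((a + b) / 2 * w) * exp ((a - b) / 2 * w) := by
    rw [← exp_add]; ring_nf
  have hb : exp (b * w) = exp ((a + b) / 2 * w) * exp (-((a - b) / 2 * w)) := by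
    rw [← exp_add]; ring_nf
  rw [cosh_eq, sinh_eq, ha, hb]
  field_simp
  ring

noncomputable def paSeriesCoeff (c : ℝ) (n : ℕ) : ℝ :=
  exp (-c) * (((2 * n)! : ℝ)⁻¹ + c * ((2 * n + 1)! : ℝ)⁻¹)

theorem paSeriesCoeff_pos {c : ℝ} (hc : 0 ≤ c) (n : ℕ) : 0 < paSeriesCoeff c n := by
  unfold paSeriesCoeff
  positivity

theorem hasSum_paSeriesCoeff_mul_pow (c : ℝ) {x : ℝ} (hx : x ≠ 0) :
    HasSum (fun n => paSeriesCoeff c n * (x ^ 2) ^ n)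
      (exp (-c) * (cosh x + c * (sinh x / x))) := by
  have h := ((hasSum_cosh x).add (((hasSum_sinh x).div_const x).mul_left c)).mul_left (exp (-c))
  refine (funext fun n => ?_ : (fun n => paSeriesCoeff c n * (x ^ 2) ^ n) = _) ▸ h
  rw [paSeriesCoeff, ← pow_mul, pow_succ]
  field_simp

theorem summable_paSeriesCoeff_mul_pow (c : ℝ) {u : ℝ} (hu : 0 < u) :
    Summable fun n => paSeriesCoeff c n * u ^ n := by
  simpa only [sq_sqrt hu.le] using
    (hasSum_paSeriesCoeff_mul_pow c (sqrt_pos.mpr hu).ne').summable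

theorem PA_eq_tsum_paSeriesCoeff {lam mu w li : ℝ} (hw : w ≠ 0)
    (hli : 4 * li * mu < (lam + mu) ^ 2) :
    PA lam mu w li = ∑' n, paSeriesCoeff ((lam + mu) * w / 2) n *
      (w ^ 2 * (lam + mu) ^ 2 / 4 + -(w ^ 2 * mu) * li) ^ n := by
  set D := sqrt ((lam + mu) ^ 2 - 4 * li * mu) with hD_def
  have hD : 0 < D := sqrt_pos.mpr (by linarith)
  have hx : D * w / 2 ≠ 0 := by positivity
  have hsq : (D * w / 2) ^ 2 = w ^ 2 * (lam + mu) ^ 2 / 4 + -(w ^ 2 * mu) * li := by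
    have hD2 : D ^ 2 = (lam + mu) ^ 2 - 4 * li * mu := sq_sqrt (by linarith)
    linear_combination (w ^ 2 / 4) * hD2
  rw [← hsq, (hasSum_paSeriesCoeff_mul_pow _ hx).tsum_eq, PA,
    mul_exp_sub_mul_exp_div_sub _ _ _ (by linarith), ← hD_def,
    show ((-(lam + mu) + D) / 2 + (-(lam + mu) - D) / 2) / 2 * w = -((lam + mu) * w / 2) by ring,
    show ((-(lam + mu) + D) / 2 - (-(lam + mu) - D) / 2) / 2 * w = D * w / 2 by ring]
  field_simp [hD.ne']
  ring

theorem PA_strictConvex (lam mu w : ℝ) (hlam : 0 < lam) (hmu : 0 < mu) (hw : 0 < w) :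
    StrictConvexOn ℝ
      {li | li ∈ Set.Ioc 0 lam ∧ 4 * li * mu < (lam + mu)^2}
      (PA lam mu w) := by
  have hc : 0 ≤ (lam + mu) * w / 2 := by positivity
  have hseries :
      StrictConvexOn ℝ (Ioi 0) fun u => ∑' n, paSeriesCoeff ((lam + mu) * w / 2) n * u ^ n :=
    strictConvexOn_tsum_mul_pow (convex_Ioi 0) Ioi_subset_Ici_self
      (fun n => (paSeriesCoeff_pos hc n).le) le_rfl (paSeriesCoeff_pos hc 2)
      fun _ hu => summable_paSeriesCoeff_mul_pow _ hu
  have hhalf : Convex ℝ {li : ℝ | 4 * li * mu < (lam + mu) ^ 2} :=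
    convex_halfSpace_lt (f := fun li => 4 * li * mu)
      ⟨fun x y => by ring, fun c x => by simp only [smul_eq_mul]; ring⟩ _
  refine (hseries.comp_const_add_mul (neg_ne_zero.mpr (by positivity))
    ((convex_Ioc 0 lam).inter hhalf) fun li hli => ?_).congr
      fun li hli => (PA_eq_tsum_paSeriesCoeff hw.ne' hli.2).symm
  show 0 < w ^ 2 * (lam + mu) ^ 2 / 4 + -(w ^ 2 * mu) * li
  have hq : 0 < (lam + mu) ^ 2 - 4 * li * mu := sub_pos.mpr hli.2
  linear_combination (w ^ 2 / 4) * hq
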